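/- For a linearly converging sequence, Aitken's Δ² transform converges faster: if x_n → x* with x_{n+1} − x* = (a + δ_n)(x_n − x*), where |a| < 1, a ≠ 0, δ_n → 0, and x_n ≠ x* for all n, then the Aitken sequence A_n = x_n − (x_{n+1} − x_n)²/(x_{n+2} − 2x_{n+1} + x_n) satisfies (A_n − x*)/(x_n − x*) → 0. -/
import Mathlib


open Filter

theorem aitken_accelerates (x : ℕ → ℝ) (xstar a : ℝ) (δ : ℕ → ℝ)
    (hxne : ∀ n, x n ≠ xstar)
    (hrec : ∀ n, x (n + 1) - xstar = (a + δ n) * (x n - xstar))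
    (ha : |a| < 1) (ha0 : a ≠ 0)
    (hδ : Tendsto δ atTop (nhds 0))
    (hden : ∀ᶠ n in atTop, x (n + 2) - 2 * x (n + 1) + x n ≠ 0) :
    Tendsto
      (fun n =>
        ((x n - (x (n + 1) - x n) ^ 2 / (x (n + 2) - 2 * x (n + 1) + x n)) - xstar)
          / (x n - xstar))
      atTop (nhds 0) := by
  have ha1 : a - 1 ≠ 0 := by
    have := abs_lt.mp ha
    intro h; nlinarith [this.2]
  have hδ' : Tendsto (fun n => δ (n + 1)) atTop (nhds 0) :=
    hδ.comp (tendsto_add_atTop_nat 1)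
  -- The limiting function
  have hF : Tendsto (fun n => 1 - (a + δ n - 1) ^ 2 /
      ((a + δ (n + 1)) * (a + δ n) - 2 * (a + δ n) + 1)) atTop (nhds 0) := by
    have hnum : Tendsto (fun n => (a + δ n - 1) ^ 2) atTop (nhds ((a + 0 - 1) ^ 2)) :=
      ((tendsto_const_nhds.add hδ).sub tendsto_const_nhds).pow 2
    have hdenl : Tendsto (fun n => (a + δ (n + 1)) * (a + δ n) - 2 * (a + δ n) + 1)
        atTop (nhds ((a + 0) * (a + 0) - 2 * (a + 0) + 1)) :=
      ((((tendsto_const_nhds.add hδ').mul (tendsto_const_nhds.add hδ)).sub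
        (tendsto_const_nhds.mul (tendsto_const_nhds.add hδ))).add tendsto_const_nhds)
    have hd0 : (a + 0) * (a + 0) - 2 * (a + 0) + 1 ≠ 0 := by
      intro h; apply ha1; nlinarith
    have h1 : Tendsto (fun n => 1 - (a + δ n - 1) ^ 2 /
        ((a + δ (n + 1)) * (a + δ n) - 2 * (a + δ n) + 1)) atTop
        (nhds (1 - (a + 0 - 1) ^ 2 / ((a + 0) * (a + 0) - 2 * (a + 0) + 1))) :=
      tendsto_const_nhds.sub (hnum.div hdenl hd0)
    convert h1 using 2
    rw [show ((a + 0 - 1) ^ 2 : ℝ) = (a + 0) * (a + 0) - 2 * (a + 0) + 1 from by ring,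
      div_self hd0]
    norm_num
  refine hF.congr' ?_
  filter_upwards [hden] with n hD
  set e := x n - xstar with he
  have hne : e ≠ 0 := sub_ne_zero.mpr (hxne n)
  set r := a + δ n with hr
  set r' := a + δ (n + 1) with hr'
  have h1 : x (n + 1) - xstar = r * e := hrec n
  have h2 : x (n + 2) - xstar = r' * (r * e) := by
    rw [← h1]; exact hrec (n + 1)
  have hx1 : x (n + 1) = r * e + xstar := by linarith
  have hx2 : x (n + 2) = r' * (r * e) + xstar := by linarith
  have hxn : x n = e + xstar := by rw [he]; ring
  have hDfac : x (n + 2) - 2 * x (n + 1) + x n = (r' * r - 2 * r + 1) * e := by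
    rw [hx1, hx2, hxn]; ring
  have hc : r' * r - 2 * r + 1 ≠ 0 := by
    intro h
    apply hD
    rw [hDfac, h, zero_mul]
  rw [hDfac, hx1, hxn]
  field_simp
  ring
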